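/- The one-parameter family of Lie-Yamaguti algebra structures 𝓛₁₉^α (α ∈ ℂ) on ℂ⁴, where 𝓛₁₉^α is given by [e₁,e₂]=e₄, [e₁,e₃]=e₄, [e₂,e₃]=e₄, [e₃,e₁,e₂]=e₄, [e₂,e₃,e₁]=α e₄, [e₁,e₂,e₃]=−(1+α)e₄, degenerates (as a parametric family) to the structure 𝓛₁₅ given by [e₁,e₂]=e₄, [e₁,e₃]=e₄, [e₂,e₃,e₁]=e₄, [e₃,e₁,e₂]=e₄, [e₂,e₃,e₂]=e₄, [e₂,e₁,e₃]=2e₄. -/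

import Mathlib

open Filter Matrix Topology

/-!
In the basis `E₁ = -t e₁, E₂ = e₂ - e₁, E₃ = e₃, E₄ = -t e₄` the bracket of `𝓛₁₉^α` becomes
exactly that of `𝓛₁₅` (the new `[E₂,E₃]` is `[e₂,e₃] - [e₁,e₃] = 0`). For the ternary product,
`[E₂,E₃,E₂] = ((α - 1)/t) E₄`, which forces `α = 1 + t`. With this choice the ternary product is
that of `𝓛₁₅` except for `[E₂,E₃,E₁] = (1 + t) E₄` and `[E₂,E₁,E₃] = (2 + t) E₄`, which tend to the
values of `𝓛₁₅` as `t → 0`.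
-/

/-- ℂ⁴ -/
abbrev V4 : Type := Fin 4 → ℂ

/-- GL₄(ℂ) -/
abbrev GL4 := Matrix.GeneralLinearGroup (Fin 4) ℂ

/-- structure constants of a bilinear map on ℂ⁴: `μ i j` is the value on `(eᵢ, eⱼ)`. -/
abbrev Bil4 := Fin 4 → Fin 4 → V4

/-- structure constants of a trilinear map on ℂ⁴. -/
abbrev Tril4 := Fin 4 → Fin 4 → Fin 4 → V4

/-- standard basis vectors -/
noncomputable def e4 (k : Fin 4) : V4 := Pi.single k (1 : ℂ)

/-- action of `g ∈ GL₄(ℂ)` on a bilinear map: `(g·μ)(x,y) = g μ(g⁻¹x, g⁻¹y)`,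
in structure constants. -/
noncomputable def actBil (g : GL4) (μ : Bil4) : Bil4 := fun i j =>
  (g : Matrix (Fin 4) (Fin 4) ℂ).mulVec
    (∑ p, ∑ q,
      (((g⁻¹ : GL4) : Matrix (Fin 4) (Fin 4) ℂ) p i *
       ((g⁻¹ : GL4) : Matrix (Fin 4) (Fin 4) ℂ) q j) • μ p q)

/-- action of `g ∈ GL₄(ℂ)` on a trilinear map:
`(g·τ)(x,y,z) = g τ(g⁻¹x, g⁻¹y, g⁻¹z)`, in structure constants. -/
noncomputable def actTril (g : GL4) (τ : Tril4) : Tril4 := fun i j k =>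
  (g : Matrix (Fin 4) (Fin 4) ℂ).mulVec
    (∑ p, ∑ q, ∑ r,
      (((g⁻¹ : GL4) : Matrix (Fin 4) (Fin 4) ℂ) p i *
       ((g⁻¹ : GL4) : Matrix (Fin 4) (Fin 4) ℂ) q j *
       ((g⁻¹ : GL4) : Matrix (Fin 4) (Fin 4) ℂ) r k) • τ p q r)

/-- the parametric family `(μ_α, τ_α)` degenerates to `(lam,sig)`: there are maps
`f : ℂ∖{0} → ℂ` and `g : ℂ∖{0} → GL₄(ℂ)` with `g(t)·μ_{f(t)} → lam`
and `g(t)·τ_{f(t)} → sig` as `t → 0`. -/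
def DegeneratesFam (μ : ℂ → Bil4) (τ : ℂ → Tril4) (lam : Bil4) (sig : Tril4) : Prop :=
  ∃ f : ℂ → ℂ, ∃ g : ℂ → GL4,
    Tendsto (fun t => actBil (g t) (μ (f t))) (𝓝[≠] (0 : ℂ)) (𝓝 lam) ∧
    Tendsto (fun t => actTril (g t) (τ (f t))) (𝓝[≠] (0 : ℂ)) (𝓝 sig)

noncomputable def μL19 : Bil4 := fun i j =>
  if i = (0 : Fin 4) ∧ j = (1 : Fin 4) then e4 3
  else if i = (1 : Fin 4) ∧ j = (0 : Fin 4) then -(e4 3)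
  else if i = (0 : Fin 4) ∧ j = (2 : Fin 4) then e4 3
  else if i = (2 : Fin 4) ∧ j = (0 : Fin 4) then -(e4 3)
  else if i = (1 : Fin 4) ∧ j = (2 : Fin 4) then e4 3
  else if i = (2 : Fin 4) ∧ j = (1 : Fin 4) then -(e4 3)
  else 0

noncomputable def τL19 (α : ℂ) : Tril4 := fun i j k =>
  if i = (2 : Fin 4) ∧ j = (0 : Fin 4) ∧ k = (1 : Fin 4) then e4 3
  else if i = (0 : Fin 4) ∧ j = (2 : Fin 4) ∧ k = (1 : Fin 4) then -(e4 3)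
  else if i = (1 : Fin 4) ∧ j = (2 : Fin 4) ∧ k = (0 : Fin 4) then α • e4 3
  else if i = (2 : Fin 4) ∧ j = (1 : Fin 4) ∧ k = (0 : Fin 4) then -(α • e4 3)
  else if i = (0 : Fin 4) ∧ j = (1 : Fin 4) ∧ k = (2 : Fin 4) then (-(1 + α)) • e4 3
  else if i = (1 : Fin 4) ∧ j = (0 : Fin 4) ∧ k = (2 : Fin 4) then -((-(1 + α)) • e4 3)
  else 0

noncomputable def μL15 : Bil4 := fun i j =>
  if i = (0 : Fin 4) ∧ j = (1 : Fin 4) then e4 3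
  else if i = (1 : Fin 4) ∧ j = (0 : Fin 4) then -(e4 3)
  else if i = (0 : Fin 4) ∧ j = (2 : Fin 4) then e4 3
  else if i = (2 : Fin 4) ∧ j = (0 : Fin 4) then -(e4 3)
  else 0

noncomputable def τL15 : Tril4 := fun i j k =>
  if i = (1 : Fin 4) ∧ j = (2 : Fin 4) ∧ k = (0 : Fin 4) then e4 3
  else if i = (2 : Fin 4) ∧ j = (1 : Fin 4) ∧ k = (0 : Fin 4) then -(e4 3)
  else if i = (2 : Fin 4) ∧ j = (0 : Fin 4) ∧ k = (1 : Fin 4) then e4 3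
  else if i = (0 : Fin 4) ∧ j = (2 : Fin 4) ∧ k = (1 : Fin 4) then -(e4 3)
  else if i = (1 : Fin 4) ∧ j = (2 : Fin 4) ∧ k = (1 : Fin 4) then e4 3
  else if i = (2 : Fin 4) ∧ j = (1 : Fin 4) ∧ k = (1 : Fin 4) then -(e4 3)
  else if i = (1 : Fin 4) ∧ j = (0 : Fin 4) ∧ k = (2 : Fin 4) then (2 : ℂ) • e4 3
  else if i = (0 : Fin 4) ∧ j = (1 : Fin 4) ∧ k = (2 : Fin 4) then -((2 : ℂ) • e4 3)
  else 0

theorem DegeneratesFam.of_eventually_eq_add_smul {μ : ℂ → Bil4} {τ : ℂ → Tril4} {lam : Bil4}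
    {sig : Tril4} (f : ℂ → ℂ) (g : ℂ → GL4) (ρ : Tril4)
    (hμ : ∀ᶠ t in 𝓝[≠] 0, actBil (g t) (μ (f t)) = lam)
    (hτ : ∀ᶠ t in 𝓝[≠] 0, actTril (g t) (τ (f t)) = sig + t • ρ) :
    DegeneratesFam μ τ lam sig := by
  refine ⟨f, g, tendsto_const_nhds.congr' (hμ.mono fun _ h => h.symm), ?_⟩
  have hlin : Tendsto (fun t : ℂ => sig + t • ρ) (𝓝 0) (𝓝 sig) :=
    Continuous.tendsto' (by fun_prop) 0 sig (by simp)
  exact (hlin.mono_left nhdsWithin_le_nhds).congr' (hτ.mono fun _ h => h.symm)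

theorem sum_smul_μL19 (h : Matrix (Fin 4) (Fin 4) ℂ) (i j : Fin 4) :
    ∑ p, ∑ q, (h p i * h q j) • μL19 p q
      = (h 0 i * h 1 j - h 1 i * h 0 j + h 0 i * h 2 j - h 2 i * h 0 j
          + h 1 i * h 2 j - h 2 i * h 1 j) • e4 3 := by
  simp [Fin.sum_univ_four, μL19]
  module

theorem sum_smul_τL19 (α : ℂ) (h : Matrix (Fin 4) (Fin 4) ℂ) (i j k : Fin 4) :
    ∑ p, ∑ q, ∑ r, (h p i * h q j * h r k) • τL19 α p q r
      = (h 2 i * h 0 j * h 1 k - h 0 i * h 2 j * h 1 k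
          + α * (h 1 i * h 2 j * h 0 k) - α * (h 2 i * h 1 j * h 0 k)
          - (1 + α) * (h 0 i * h 1 j * h 2 k) + (1 + α) * (h 1 i * h 0 j * h 2 k)) • e4 3 := by
  simp [Fin.sum_univ_four, τL19]
  module

namespace L19ToL15

noncomputable def mat (t : ℂ) : Matrix (Fin 4) (Fin 4) ℂ :=
  !![-1/t, -1/t, 0, 0; 0, 1, 0, 0; 0, 0, 1, 0; 0, 0, 0, -1/t]

/-- The columns are the basis `E₁, …, E₄` of the header in the coordinates `e₁, …, e₄`. -/
def matInv (t : ℂ) : Matrix (Fin 4) (Fin 4) ℂ :=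
  !![-t, -1, 0, 0; 0, 1, 0, 0; 0, 0, 1, 0; 0, 0, 0, -t]

theorem mat_mul_matInv {t : ℂ} (ht : t ≠ 0) : mat t * matInv t = 1 := by
  ext i j
  fin_cases i <;> fin_cases j <;>
    simp [mat, matInv, mul_apply, Fin.sum_univ_four] <;> field_simp

noncomputable def gl (t : ℂ) : GL4 :=
  if ht : t = 0 then 1 else ⟨mat t, matInv t, mat_mul_matInv ht,
    mul_eq_one_comm.mp (mat_mul_matInv ht)⟩

theorem coe_gl {t : ℂ} (ht : t ≠ 0) : (gl t : Matrix (Fin 4) (Fin 4) ℂ) = mat t := by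
  simp [gl, ht]

theorem coe_gl_inv {t : ℂ} (ht : t ≠ 0) :
    (((gl t)⁻¹ : GL4) : Matrix (Fin 4) (Fin 4) ℂ) = matInv t := by
  simp [gl, ht, Units.inv_mk]

theorem mat_mulVec_e4_three (t : ℂ) : mat t *ᵥ e4 3 = (-1/t) • e4 3 := by
  funext k
  fin_cases k <;> simp [mat, e4, mulVec, dotProduct, Pi.single_apply]

noncomputable def τCorrection : Tril4 := fun i j k =>
  if i = (1 : Fin 4) ∧ j = (2 : Fin 4) ∧ k = (0 : Fin 4) then e4 3
  else if i = (2 : Fin 4) ∧ j = (1 : Fin 4) ∧ k = (0 : Fin 4) then -(e4 3)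
  else if i = (1 : Fin 4) ∧ j = (0 : Fin 4) ∧ k = (2 : Fin 4) then e4 3
  else if i = (0 : Fin 4) ∧ j = (1 : Fin 4) ∧ k = (2 : Fin 4) then -(e4 3)
  else 0

theorem actBil_gl_μL19 {t : ℂ} (ht : t ≠ 0) : actBil (gl t) μL19 = μL15 := by
  funext i j l
  simp only [actBil, coe_gl ht, coe_gl_inv ht, sum_smul_μL19, mulVec_smul,
    mat_mulVec_e4_three]
  fin_cases i <;> fin_cases j <;> fin_cases l <;> simp [matInv, μL15, e4] <;> field_simp

theorem actTril_gl_τL19 {t : ℂ} (ht : t ≠ 0) :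
    actTril (gl t) (τL19 (1 + t)) = τL15 + t • τCorrection := by
  funext i j k l
  simp only [actTril, coe_gl ht, coe_gl_inv ht, sum_smul_τL19, mulVec_smul,
    mat_mulVec_e4_three]
  fin_cases i <;> fin_cases j <;> fin_cases k <;> fin_cases l <;>
    simp [matInv, τL15, τCorrection, e4, ht] <;> field_simp <;> ring

end L19ToL15

open L19ToL15 in
/-- the family 𝓛₁₉^α degenerates to 𝓛₁₅. -/
theorem stmt3 : DegeneratesFam (fun _ => μL19) τL19 μL15 τL15 :=
  DegeneratesFam.of_eventually_eq_add_smul (fun t => 1 + t) gl τCorrection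
    (eventually_mem_nhdsWithin.mono fun _ ht => actBil_gl_μL19 ht)
    (eventually_mem_nhdsWithin.mono fun _ ht => actTril_gl_τL19 ht)
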